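/- Let H be a complex Hilbert space, r ≥ 2, and let A_0, …, A_{r-1} be pairwise commuting bounded self-adjoint operators on H. Let B be the r × r operator companion matrix (acting on H^r) with rows and columns indexed by 0, …, r−1, defined by B_{0,k} = A_k for k = 0, …, r−1, B_{i,i-1} = I_H for i = 1, …, r−1, and all other entries equal to 0. Then for every n ≥ r and all indices 0 ≤ a, b ≤ r−1, the (a, b) entry of the matrix power B^n is given by (B^n)_{a,b} = Σ_{s=0}^{r-1} ρ(n + r − 1 − a − s, r; A) · C_{s,b}, where C_{s,b} := A_{s+b} if s + b ≤ r−1 and C_{s,b} := 0 otherwise. -/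
import Mathlib


open Finset Nat

/-- The combinatorial operator coefficient `ρ(m, r; A)`: the sum, over multi-indices
`k = (k₀, …, k_{r-1}) ∈ ℤ₊ʳ` with `1·k₀ + 2·k₁ + ⋯ + r·k_{r-1} = m − r`, of the multinomial
coefficient `(k₀+⋯+k_{r-1})! / (k₀!⋯k_{r-1}!)` times `A₀^{k₀} ⋯ A_{r-1}^{k_{r-1}}`,
with the convention `ρ(m, r; A) = 0` for `m < r` (and in particular `ρ(r, r; A) = 1`). -/
noncomputable def rho {R : Type*} [Ring R] (r : ℕ) (A : ℕ → R) (m : ℕ) : R :=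
  if m < r then 0
  else ∑ k ∈ (Fintype.piFinset fun _ : Fin r => Finset.range (m - r + 1)).filter
      (fun k : Fin r → ℕ => ∑ j : Fin r, ((j : ℕ) + 1) * k j = m - r),
    (Nat.multinomial Finset.univ k : R) * (List.ofFn fun j : Fin r => A (j : ℕ) ^ k j).prod

lemma mul_list_prod_set {M : Type*} [Monoid M] (a : M) : ∀ (l : List M) (c : ℕ) (h : c < l.length),
    (∀ x ∈ l.take c, Commute a x) → a * l.prod = (l.set c (a * l.get ⟨c, h⟩)).prod := by
  intro l
  induction l with
  | nil => intro c h; simp at h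
  | cons x t ih =>
    intro c h hcomm
    cases c with
    | zero => simp [mul_assoc]
    | succ c =>
      have hx : Commute a x := hcomm x (by simp)
      have hc : c < t.length := by simp at h; omega
      simp only [List.prod_cons, List.set_cons_succ]
      rw [← mul_assoc, hx.eq, mul_assoc, ih c hc (fun y hy => hcomm y (by simp [hy]))]
      rfl

lemma ofFn_set_eq {M : Type*} {r : ℕ} (f : Fin r → M) (c : Fin r) (v : M) :
    (List.ofFn f).set (c : ℕ) v = List.ofFn (Function.update f c v) := by
  apply List.ext_get
  · simp
  · intro i h1 h2
    simp only [List.get_eq_getElem, List.getElem_set, List.getElem_ofFn]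
    have hi : i < r := by simpa using h2
    rcases eq_or_ne (c : ℕ) i with h | h
    · simp only [h, if_pos rfl]
      have : (⟨i, hi⟩ : Fin r) = c := by simp [Fin.ext_iff, h]
      rw [this]; simp
    · rw [if_neg h, Function.update_of_ne]
      simp [Fin.ext_iff, Ne.symm h]

lemma multinomial_pascal {r : ℕ} (k : Fin r → ℕ) (hk : 0 < ∑ i, k i) :
    Nat.multinomial Finset.univ k
      = ∑ c : Fin r, if k c ≠ 0 then
          Nat.multinomial Finset.univ (Function.update k c (k c - 1)) else 0 := by
  have hP : 0 < ∏ i : Fin r, (k i)! := Finset.prod_pos fun i _ => Nat.factorial_pos _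
  apply Nat.eq_of_mul_eq_mul_left hP
  rw [Finset.mul_sum]
  have hspec := Nat.multinomial_spec Finset.univ k
  rw [hspec]
  have key : ∀ c : Fin r,
      ((∏ i : Fin r, (k i)!) * (if k c ≠ 0 then
        Nat.multinomial Finset.univ (Function.update k c (k c - 1)) else 0))
      = k c * (∑ i, k i - 1)! := by
    intro c
    by_cases hc : k c = 0
    · simp [hc]
    · simp only [hc, ne_eq, not_false_iff, if_true]
      have hspec2 := Nat.multinomial_spec Finset.univ (Function.update k c (k c - 1))
      have hsum : ∑ i, Function.update k c (k c - 1) i = ∑ i, k i - 1 := by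
        rw [Finset.sum_update_of_mem (Finset.mem_univ c)]
        have : k c ≤ ∑ i, k i := Finset.single_le_sum (f := k) (fun i _ => Nat.zero_le _) (Finset.mem_univ c)
        have : ∑ i, k i = k c + ∑ i ∈ univ \ {c}, k i := by
          rw [Finset.sdiff_singleton_eq_erase, Finset.add_sum_erase _ _ (Finset.mem_univ c)]
        omega
      have hprod : k c * ∏ i, (Function.update k c (k c - 1) i)! = ∏ i, (k i)! := by
        have hup : (fun i => (Function.update k c (k c - 1) i)!)
            = Function.update (fun i => (k i)!) c ((k c - 1)!) := by
          funext i
          by_cases hic : i = c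
          · subst hic; simp
          · simp [hic]
        rw [show (∏ i, (Function.update k c (k c - 1) i)!) = ∏ i, Function.update (fun i => (k i)!) c ((k c - 1)!) i from by rw [← hup]]
        rw [Finset.prod_update_of_mem (Finset.mem_univ c), ← mul_assoc]
        have h1 : k c * (k c - 1)! = (k c)! := by
          obtain ⟨m, hm⟩ := Nat.exists_eq_succ_of_ne_zero hc
          rw [hm]; simp [Nat.factorial_succ]
        rw [h1, Finset.sdiff_singleton_eq_erase]
        exact Finset.mul_prod_erase univ (fun i => (k i)!) (Finset.mem_univ c)
      calc (∏ i : Fin r, (k i)!) * Nat.multinomial Finset.univ (Function.update k c (k c - 1))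
          = k c * ((∏ i, (Function.update k c (k c - 1) i)!) *
              Nat.multinomial Finset.univ (Function.update k c (k c - 1))) := by
            rw [← mul_assoc, hprod]
        _ = k c * (∑ i, k i - 1)! := by rw [hspec2, hsum]
  refine Eq.symm ?_
  calc ∑ c : Fin r, (∏ i : Fin r, (k i)!) * (if k c ≠ 0 then
        Nat.multinomial Finset.univ (Function.update k c (k c - 1)) else 0)
      = ∑ c : Fin r, k c * (∑ i, k i - 1)! := Finset.sum_congr rfl fun c _ => key c
    _ = (∑ c, k c) * (∑ i, k i - 1)! := by rw [Finset.sum_mul]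
    _ = (∑ i, k i)! := by
        obtain ⟨m, hm⟩ := Nat.exists_eq_succ_of_ne_zero (Nat.pos_iff_ne_zero.mp hk)
        rw [hm]; simp [Nat.factorial_succ]

def Sset (r d : ℕ) : Finset (Fin r → ℕ) :=
  (Fintype.piFinset fun _ : Fin r => Finset.range (d + 1)).filter
    (fun k : Fin r → ℕ => ∑ j : Fin r, ((j : ℕ) + 1) * k j = d)

lemma mem_Sset {r d : ℕ} {k : Fin r → ℕ} :
    k ∈ Sset r d ↔ ∑ j : Fin r, ((j : ℕ) + 1) * k j = d := by
  simp only [Sset, Finset.mem_filter, Fintype.mem_piFinset, Finset.mem_range, Nat.lt_succ_iff]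
  refine ⟨fun h => h.2, fun h => ⟨fun j => ?_, h⟩⟩
  have h1 : ((j : ℕ) + 1) * k j ≤ d := h ▸ Finset.single_le_sum
    (f := fun j : Fin r => ((j : ℕ) + 1) * k j) (fun i _ => Nat.zero_le _) (Finset.mem_univ j)
  nlinarith [Nat.le_mul_of_pos_left (k j) (Nat.succ_pos (j : ℕ))]

lemma rho_of_le {R : Type*} [Ring R] {r : ℕ} (A : ℕ → R) {m : ℕ} (h : r ≤ m) :
    rho r A m = ∑ k ∈ Sset r (m - r),
      (Nat.multinomial Finset.univ k : R) * (List.ofFn fun j : Fin r => A (j : ℕ) ^ k j).prod := by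
  rw [rho, if_neg (by omega)]; rfl

lemma rho_of_lt {R : Type*} [Ring R] {r : ℕ} (A : ℕ → R) {m : ℕ} (h : m < r) :
    rho r A m = 0 := by rw [rho, if_pos h]

lemma Sset_zero (r : ℕ) : Sset r 0 = {fun _ => 0} := by
  ext k
  simp only [mem_Sset, Finset.mem_singleton]
  constructor
  · intro h
    funext j
    have := Finset.sum_eq_zero_iff.mp h j (Finset.mem_univ j)
    simpa using this
  · rintro rfl; simp

lemma rho_self {R : Type*} [Ring R] {r : ℕ} (A : ℕ → R) : rho r A r = 1 := by
  rw [rho_of_le A le_rfl, Nat.sub_self, Sset_zero, Finset.sum_singleton]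
  have h1 : Nat.multinomial Finset.univ (fun _ : Fin r => 0) = 1 := by
    simp [Nat.multinomial]
  rw [h1, Nat.cast_one, one_mul]
  exact List.prod_eq_one (fun x hx => by
    rw [List.mem_ofFn] at hx; obtain ⟨j, rfl⟩ := hx; exact pow_zero _)

lemma mul_prod_pow {R : Type*} [Ring R] {r : ℕ} (A : ℕ → R)
    (hcomm : ∀ i < r, ∀ j < r, Commute (A i) (A j)) (c : Fin r) (k : Fin r → ℕ) :
    A (c : ℕ) * (List.ofFn fun j : Fin r => A (j : ℕ) ^ k j).prod
      = (List.ofFn fun j : Fin r => A (j : ℕ) ^ (Function.update k c (k c + 1)) j).prod := by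
  have hlen : (c : ℕ) < (List.ofFn fun j : Fin r => A (j : ℕ) ^ k j).length := by
    simpa using c.isLt
  rw [mul_list_prod_set (A (c : ℕ)) _ (c : ℕ) hlen (by
    intro x hx
    have hx' := List.mem_of_mem_take hx
    rw [List.mem_ofFn] at hx'
    obtain ⟨j, rfl⟩ := hx'
    exact (hcomm (c : ℕ) c.isLt (j : ℕ) j.isLt).pow_right _)]
  have hget : (List.ofFn fun j : Fin r => A (j : ℕ) ^ k j).get ⟨(c : ℕ), hlen⟩
      = A (c : ℕ) ^ k c := by
    simp [List.get_ofFn]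
  rw [hget, ← pow_succ' (A (c : ℕ)) (k c)]
  rw [show ((c : ℕ) : ℕ) = ((c : Fin r) : ℕ) from rfl]
  rw [ofFn_set_eq]
  have hfun : Function.update (fun j : Fin r => A (j : ℕ) ^ k j) c (A (c : ℕ) ^ (k c + 1))
      = fun j : Fin r => A (j : ℕ) ^ Function.update k c (k c + 1) j := by
    funext j
    by_cases hj : j = c
    · subst hj; simp
    · simp [hj]
  rw [hfun]

lemma sum_coeff_split {r : ℕ} (k : Fin r → ℕ) (c : Fin r) :
    ∑ j : Fin r, ((j : ℕ) + 1) * k j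
      = ((c : ℕ) + 1) * k c + ∑ j ∈ Finset.univ.erase c, ((j : ℕ) + 1) * k j :=
  (Finset.add_sum_erase _ _ (Finset.mem_univ c)).symm

lemma sum_coeff_update {r : ℕ} (k : Fin r → ℕ) (c : Fin r) (v : ℕ) :
    ∑ j : Fin r, ((j : ℕ) + 1) * Function.update k c v j
      = ((c : ℕ) + 1) * v + ∑ j ∈ Finset.univ.erase c, ((j : ℕ) + 1) * k j := by
  rw [sum_coeff_split (Function.update k c v) c, Function.update_self]
  congr 1
  exact Finset.sum_congr rfl fun j hj => by
    rw [Function.update_of_ne (Finset.ne_of_mem_erase hj)]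

lemma rho_rec {R : Type*} [Ring R] {r : ℕ} (A : ℕ → R)
    (hcomm : ∀ i < r, ∀ j < r, Commute (A i) (A j)) {m : ℕ} (hm : r < m) :
    rho r A m = ∑ c ∈ Finset.range r, A c * rho r A (m - 1 - c) := by
  have hd : 1 ≤ m - r := by omega
  set d := m - r with hdef
  rw [rho_of_le A (le_of_lt hm)]
  rw [← Fin.sum_univ_eq_sum_range (fun c => A c * rho r A (m - 1 - c)) r]
  -- step 1 : apply Pascal to each multinomial
  have step1 : ∀ k ∈ Sset r d,
      (Nat.multinomial Finset.univ k : R) * (List.ofFn fun j : Fin r => A (j : ℕ) ^ k j).prod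
      = ∑ c : Fin r, (if k c ≠ 0 then
          (Nat.multinomial Finset.univ (Function.update k c (k c - 1)) : R) else 0)
          * (List.ofFn fun j : Fin r => A (j : ℕ) ^ k j).prod := by
    intro k hk
    rw [mem_Sset] at hk
    have hpos : 0 < ∑ i, k i := by
      by_contra h
      push_neg at h
      have hsum0 : ∑ i, k i = 0 := by omega
      have : ∀ i ∈ Finset.univ, k i = 0 := Finset.sum_eq_zero_iff.mp hsum0
      have h0 : ∀ j ∈ (Finset.univ : Finset (Fin r)), ((j : ℕ) + 1) * k j = 0 :=
        fun j hj => by rw [this j hj, mul_zero]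
      rw [Finset.sum_eq_zero h0] at hk
      omega
    rw [← Finset.sum_mul]
    congr 1
    rw [multinomial_pascal k hpos]
    push_cast
    exact Finset.sum_congr rfl fun c _ => by split <;> simp
  rw [Finset.sum_congr rfl step1, Finset.sum_comm]
  refine Finset.sum_congr rfl fun c _ => ?_
  -- fixed c : goal about one column
  have hsplit : ∀ k : Fin r → ℕ,
      (if k c ≠ 0 then (Nat.multinomial Finset.univ (Function.update k c (k c - 1)) : R) else 0)
        * (List.ofFn fun j : Fin r => A (j : ℕ) ^ k j).prod
      = if k c ≠ 0 then
          (Nat.multinomial Finset.univ (Function.update k c (k c - 1)) : R)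
            * (List.ofFn fun j : Fin r => A (j : ℕ) ^ k j).prod
        else 0 := fun k => by split <;> simp
  rw [Finset.sum_congr rfl fun k _ => hsplit k, ← Finset.sum_filter]
  by_cases hcd : (c : ℕ) + 1 ≤ d
  · -- main case
    have hrle : r ≤ m - 1 - (c : ℕ) := by omega
    rw [rho_of_le A hrle]
    have hd' : m - 1 - (c : ℕ) - r = d - 1 - (c : ℕ) := by omega
    rw [hd', Finset.mul_sum]
    have hterm : ∀ k' : Fin r → ℕ,
        A (c : ℕ) * ((Nat.multinomial Finset.univ k' : R)
            * (List.ofFn fun j : Fin r => A (j : ℕ) ^ k' j).prod)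
        = (Nat.multinomial Finset.univ k' : R)
            * (List.ofFn fun j : Fin r => A (j : ℕ) ^ (Function.update k' c (k' c + 1)) j).prod := by
      intro k'
      rw [((Nat.cast_commute (Nat.multinomial Finset.univ k') (A (c : ℕ))).symm).left_comm,
        mul_prod_pow A hcomm c k']
    rw [Finset.sum_congr rfl fun k' _ => hterm k']
    refine Finset.sum_bij' (fun k _ => Function.update k c (k c - 1))
      (fun k' _ => Function.update k' c (k' c + 1)) ?_ ?_ ?_ ?_ ?_
    · intro k hk
      rw [Finset.mem_filter, mem_Sset] at hk
      obtain ⟨hk1, hk2⟩ := hk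
      rw [mem_Sset, sum_coeff_update]
      rw [sum_coeff_split k c] at hk1
      have hkc : 1 ≤ k c := by omega
      have : ((c : ℕ) + 1) * (k c - 1) + ((c : ℕ) + 1) = ((c : ℕ) + 1) * k c := by
        obtain ⟨t, ht⟩ : ∃ t, k c = t + 1 := ⟨k c - 1, by omega⟩
        rw [ht, Nat.add_sub_cancel]; ring
      omega
    · intro k' hk'
      rw [mem_Sset] at hk'
      rw [Finset.mem_filter, mem_Sset, sum_coeff_update]
      rw [sum_coeff_split k' c] at hk'
      constructor
      · have : ((c : ℕ) + 1) * (k' c + 1) = ((c : ℕ) + 1) * k' c + ((c : ℕ) + 1) := by ring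
        omega
      · simp
    · intro k hk
      rw [Finset.mem_filter] at hk
      have hkc : k c ≠ 0 := hk.2
      simp only [Function.update_self, Function.update_idem]
      rw [show k c - 1 + 1 = k c from by omega, Function.update_eq_self]
    · intro k' _
      simp only [Function.update_self, Function.update_idem]
      rw [show k' c + 1 - 1 = k' c from rfl, Function.update_eq_self]
    · intro k hk
      rw [Finset.mem_filter] at hk
      have hkc : k c ≠ 0 := hk.2
      have huk : Function.update (Function.update k c (k c - 1)) c
          (Function.update k c (k c - 1) c + 1) = k := by
        simp only [Function.update_self, Function.update_idem]
        rw [show k c - 1 + 1 = k c from by omega, Function.update_eq_self]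
      rw [huk]
  · -- empty case
    have hempty : (Sset r d).filter (fun k : Fin r → ℕ => k c ≠ 0) = ∅ := by
      rw [Finset.filter_eq_empty_iff]
      intro k hk
      rw [mem_Sset] at hk
      rw [sum_coeff_split k c] at hk
      intro hne
      have hkc : 1 ≤ k c := by omega
      have : (c : ℕ) + 1 ≤ ((c : ℕ) + 1) * k c := Nat.le_mul_of_pos_right _ (by omega)
      omega
    rw [hempty, Finset.sum_empty]
    have hlt : m - 1 - (c : ℕ) < r := by
      have := c.isLt
      omega
    rw [rho_of_lt A hlt, mul_zero]

lemma rho_column {R : Type*} [Ring R] {r : ℕ} (hr : 1 ≤ r) (A : ℕ → R)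
    (hcomm : ∀ i < r, ∀ j < r, Commute (A i) (A j)) {n : ℕ} (hn : 1 ≤ n) (s : ℕ) (hs : s < r) :
    ∑ c ∈ Finset.range r, A c * rho r A (n + r - 1 - s - c)
      = rho r A (n + r - s) - (if s = n then 1 else 0) := by
  rcases lt_trichotomy s n with h | h | h
  · rw [if_neg (by omega), sub_zero, rho_rec A hcomm (show r < n + r - s by omega)]
    refine Finset.sum_congr rfl fun c hc => ?_
    rw [show n + r - s - 1 - c = n + r - 1 - s - c from by omega]
  · rw [if_pos h, show n + r - s = r from by omega, rho_self, sub_self]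
    refine Finset.sum_eq_zero fun c hc => ?_
    rw [Finset.mem_range] at hc
    rw [rho_of_lt A (show n + r - 1 - s - c < r by omega), mul_zero]
  · rw [if_neg (by omega), sub_zero]
    rw [rho_of_lt A (show n + r - s < r by omega)]
    refine Finset.sum_eq_zero fun c hc => ?_
    rw [rho_of_lt A (show n + r - 1 - s - c < r by omega), mul_zero]

lemma companion_pow_entry {R : Type*} [Ring R] {r : ℕ} (hr : 2 ≤ r) (A : ℕ → R)
    (hcomm : ∀ i < r, ∀ j < r, Commute (A i) (A j))
    (B : Matrix (Fin r) (Fin r) R)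
    (hB : ∀ i k : Fin r, B i k =
      if (i : ℕ) = 0 then A (k : ℕ) else if (i : ℕ) = (k : ℕ) + 1 then 1 else 0) :
    ∀ n : ℕ, 1 ≤ n → ∀ a b : Fin r,
      (B ^ n) a b = (∑ s ∈ Finset.range r,
          rho r A (n + r - 1 - (a : ℕ) - s) *
            (if s + (b : ℕ) ≤ r - 1 then A (s + (b : ℕ)) else 0))
        + (if (a : ℕ) = n + (b : ℕ) then 1 else 0) := by
  intro n hn
  induction n, hn using Nat.le_induction with
  | base =>
    intro a b
    rw [pow_one, hB]
    by_cases ha : (a : ℕ) = 0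
    · rw [if_pos ha, ha]
      have hb : (0 : ℕ) + (b : ℕ) ≤ r - 1 := by have := b.isLt; omega
      rw [if_neg (by omega)]
      rw [add_zero]
      rw [Finset.sum_eq_single 0]
      · rw [show 1 + r - 1 - 0 - 0 = r from by omega, rho_self, if_pos hb, one_mul, zero_add]
      · intro s hsr hs0
        rw [Finset.mem_range] at hsr
        rw [rho_of_lt A (show 1 + r - 1 - 0 - s < r by omega), zero_mul]
      · intro h
        exact absurd (Finset.mem_range.mpr (by omega)) h
    · rw [if_neg ha]
      have hsum : ∑ s ∈ Finset.range r,
          rho r A (1 + r - 1 - (a : ℕ) - s) *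
            (if s + (b : ℕ) ≤ r - 1 then A (s + (b : ℕ)) else 0) = 0 :=
        Finset.sum_eq_zero fun s hs => by
          rw [rho_of_lt A (show 1 + r - 1 - (a : ℕ) - s < r by omega), zero_mul]
      rw [hsum, zero_add]
      congr 1
      simp only [eq_iff_iff]
      omega
  | succ n hn ih =>
    intro a b
    rw [show B ^ (n + 1) = B * B ^ n from pow_succ' B n, Matrix.mul_apply]
    by_cases ha : (a : ℕ) = 0
    · -- first row
      have hBa : ∀ c : Fin r, B a c = A (c : ℕ) := fun c => by rw [hB, if_pos ha]
      calc ∑ c : Fin r, B a c * (B ^ n) c b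
          = ∑ c : Fin r, A (c : ℕ) *
              ((∑ s ∈ Finset.range r, rho r A (n + r - 1 - (c : ℕ) - s) *
                (if s + (b : ℕ) ≤ r - 1 then A (s + (b : ℕ)) else 0))
               + (if (c : ℕ) = n + (b : ℕ) then 1 else 0)) := by
            refine Finset.sum_congr rfl fun c _ => ?_
            rw [hBa c, ih c b]
        _ = (∑ c : Fin r, ∑ s ∈ Finset.range r, (A (c : ℕ) * rho r A (n + r - 1 - s - (c : ℕ))) *
              (if s + (b : ℕ) ≤ r - 1 then A (s + (b : ℕ)) else 0))
             + ∑ c : Fin r, A (c : ℕ) * (if (c : ℕ) = n + (b : ℕ) then 1 else 0) := by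
            rw [← Finset.sum_add_distrib]
            refine Finset.sum_congr rfl fun c _ => ?_
            rw [mul_add, Finset.mul_sum]
            congr 1
            refine Finset.sum_congr rfl fun s _ => ?_
            rw [show n + r - 1 - (c : ℕ) - s = n + r - 1 - s - (c : ℕ) from by omega, ← mul_assoc]
        _ = (∑ s ∈ Finset.range r, (∑ c ∈ Finset.range r, A c * rho r A (n + r - 1 - s - c)) *
              (if s + (b : ℕ) ≤ r - 1 then A (s + (b : ℕ)) else 0))
             + (if n + (b : ℕ) < r then A (n + (b : ℕ)) else 0) := by
            congr 1
            · rw [Finset.sum_comm]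
              refine Finset.sum_congr rfl fun s _ => ?_
              rw [← Finset.sum_mul]
              congr 1
              exact Fin.sum_univ_eq_sum_range (fun c => A c * rho r A (n + r - 1 - s - c)) r
            · rcases lt_or_ge (n + (b : ℕ)) r with h | h
              · rw [if_pos h, Finset.sum_eq_single (⟨n + (b : ℕ), h⟩ : Fin r)]
                · rw [if_pos rfl, mul_one]
                · intro c _ hc
                  rw [if_neg (by simpa [Fin.ext_iff] using hc), mul_zero]
                · intro h'; exact absurd (Finset.mem_univ _) h'
              · rw [if_neg (show ¬(n + (b : ℕ) < r) from by omega)]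
                refine Finset.sum_eq_zero fun c _ => ?_
                rw [if_neg (show ¬((c : Fin r) : ℕ) = n + (b : ℕ) from by have := c.isLt; omega), mul_zero]
        _ = ∑ s ∈ Finset.range r, rho r A (n + 1 + r - 1 - (a : ℕ) - s) *
              (if s + (b : ℕ) ≤ r - 1 then A (s + (b : ℕ)) else 0)
            + (if (a : ℕ) = n + 1 + (b : ℕ) then 1 else 0) := by
            rw [if_neg (show ¬((a : ℕ) = n + 1 + (b : ℕ)) from by omega), add_zero]
            have hcol : ∀ s ∈ Finset.range r,
                (∑ c ∈ Finset.range r, A c * rho r A (n + r - 1 - s - c)) *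
                  (if s + (b : ℕ) ≤ r - 1 then A (s + (b : ℕ)) else 0)
                = (rho r A (n + r - s) - (if s = n then 1 else 0)) *
                  (if s + (b : ℕ) ≤ r - 1 then A (s + (b : ℕ)) else 0) := fun s hs => by
              rw [rho_column (by omega) A hcomm hn s (Finset.mem_range.mp hs)]
            rw [Finset.sum_congr rfl hcol]
            have hsplit : ∀ s ∈ Finset.range r,
                (rho r A (n + r - s) - (if s = n then 1 else 0)) *
                  (if s + (b : ℕ) ≤ r - 1 then A (s + (b : ℕ)) else 0)
                = rho r A (n + r - s) * (if s + (b : ℕ) ≤ r - 1 then A (s + (b : ℕ)) else 0)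
                  - (if s = n then 1 else 0) * (if s + (b : ℕ) ≤ r - 1 then A (s + (b : ℕ)) else 0) :=
              fun s _ => sub_mul _ _ _
            rw [Finset.sum_congr rfl hsplit, Finset.sum_sub_distrib]
            have hdel : ∑ s ∈ Finset.range r, (if s = n then (1 : R) else 0) *
                (if s + (b : ℕ) ≤ r - 1 then A (s + (b : ℕ)) else 0)
                = (if n + (b : ℕ) < r then A (n + (b : ℕ)) else 0) := by
              have : ∀ s ∈ Finset.range r, (if s = n then (1 : R) else 0) *
                  (if s + (b : ℕ) ≤ r - 1 then A (s + (b : ℕ)) else 0)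
                  = if s = n then (if s + (b : ℕ) ≤ r - 1 then A (s + (b : ℕ)) else 0) else 0 :=
                fun s _ => by split <;> simp
              rw [Finset.sum_congr rfl this, Finset.sum_ite_eq' (Finset.range r) n]
              by_cases hnr : n ∈ Finset.range r
              · rw [if_pos hnr]
                rw [Finset.mem_range] at hnr
                have hbr := b.isLt
                by_cases hnb : n + (b : ℕ) < r
                · rw [if_pos (by omega), if_pos hnb]
                · rw [if_neg (by omega), if_neg hnb]
              · rw [if_neg hnr]
                rw [Finset.mem_range] at hnr
                rw [if_neg (show ¬(n + (b : ℕ) < r) from by omega)]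
            rw [hdel, sub_add_cancel]
            refine Finset.sum_congr rfl fun s hs => ?_
            congr 2
            omega
    · -- shift rows
      have ha1 : 1 ≤ (a : ℕ) := by omega
      set a' : Fin r := ⟨(a : ℕ) - 1, by have := a.isLt; omega⟩ with ha'
      have hstep : ∑ c : Fin r, B a c * (B ^ n) c b = (B ^ n) a' b := by
        rw [Finset.sum_eq_single a']
        · rw [hB, if_neg ha, if_pos (by simp [ha']; omega), one_mul]
        · intro c _ hc
          rw [hB, if_neg ha, if_neg, zero_mul]
          intro hcon
          apply hc
          simp [ha', Fin.ext_iff]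
          omega
        · intro h'; exact absurd (Finset.mem_univ _) h'
      rw [hstep, ih a' b]
      congr 1
      · refine Finset.sum_congr rfl fun s hs => ?_
        congr 2
        simp only [ha']
        omega
      · have hiff : ((a : ℕ) - 1 = n + (b : ℕ)) ↔ ((a : ℕ) = n + 1 + (b : ℕ)) := by omega
        simp only [ha', hiff]

/-- Explicit combinatorial formula for the entries of the powers of the operator-valued
companion matrix `B` (first row `A₀, …, A_{r-1}`, identities on the subdiagonal) built from
pairwise commuting bounded self-adjoint operators. -/
theorem companion_matrix_power_entries
    {H : Type*} [NormedAddCommGroup H] [InnerProductSpace ℂ H] [CompleteSpace H]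
    {r : ℕ} (hr : 2 ≤ r) (A : ℕ → H →L[ℂ] H)
    (hsa : ∀ i < r, IsSelfAdjoint (A i))
    (hcomm : ∀ i < r, ∀ j < r, Commute (A i) (A j))
    (B : Matrix (Fin r) (Fin r) (H →L[ℂ] H))
    (hB : ∀ i k : Fin r, B i k =
      if (i : ℕ) = 0 then A (k : ℕ)
      else if (i : ℕ) = (k : ℕ) + 1 then 1 else 0) :
    ∀ n : ℕ, r ≤ n → ∀ a b : Fin r,
      (B ^ n) a b = ∑ s ∈ Finset.range r,
        rho r A (n + r - 1 - (a : ℕ) - s) *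
          (if s + (b : ℕ) ≤ r - 1 then A (s + (b : ℕ)) else 0) := by
  intro n hn a b
  rw [companion_pow_entry hr A hcomm B hB n (by omega) a b,
    if_neg (show ¬((a : ℕ) = n + (b : ℕ)) from by have := a.isLt; omega), add_zero]
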